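/- arXiv:2004.01548 — 7 statements merged into one kernel-verified Lean document; each statement's English description precedes it below -/
import Mathlib

section
/- Let j be a translational covariant discrete vector field on the one-dimensional discrete torus ZMod N. Define C(η) := (1/N) · ∑_{x ∈ ZMod N} j_η(x, x+1) and h(η) := ∑_{x=1}^{N−1} (x/N) · j_η(x̄, x̄+1), where x̄ denotes the class of the integer x in ZMod N. Then C is translational invariant, and for every configuration η and every x ∈ ZMod N one has j_η(x, x+1) = τ_{x+1}h(η) − τ_x h(η) + C(η). -/
/-!
Covariance turns every shifted quantity `h(τ_{-x} η)` into a weighted sum of the single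
periodic sequence `k ↦ j_η(k̄ + x, k̄ + x + 1)`, with weights `k / N` for `0 ≤ k < N`. Summation
by parts shows that shifting such a sequence by one changes the weighted sum by its value at
`0` minus its mean, which is exactly `j_η(x, x+1) - C(η)`. The invariance of `C` is a
reindexing of the sum over the torus.
-/

open Finset

theorem Finset.sum_range_natCast_mul_sub {R : Type*} [CommRing R] (f : ℕ → R) (n : ℕ) :
    ∑ k ∈ range n, (k : R) * (f (k + 1) - f k) = n * f n - ∑ k ∈ range n, f (k + 1) := by
  have telescope := sum_range_sub (fun k => (k : R) * f k) n
  simp only [Nat.cast_zero, zero_mul, sub_zero] at telescope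
  rw [eq_sub_iff_add_eq, ← telescope, ← sum_add_distrib]
  refine sum_congr rfl fun k _ => ?_
  push_cast
  ring

namespace ZMod

variable {N : ℕ} [NeZero N] {M : Type*} [AddCommMonoid M]

theorem sum_range_natCast (g : ZMod N → M) :
    ∑ k ∈ range N, g k = ∑ y : ZMod N, g y :=
  sum_bij' (fun k _ => (k : ZMod N)) (fun y _ => y.val) (fun _ _ => mem_univ _)
    (fun y _ => mem_range.mpr y.val_lt) (fun _ hk => val_cast_of_lt (mem_range.mp hk))
    (fun y _ => natCast_zmod_val y) (fun _ _ => rfl)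

theorem sum_Icc_one_pred_natCast {f : ℕ → M} (hf : f 0 = 0) :
    ∑ k ∈ Icc 1 (N - 1), f k = ∑ k ∈ range N, f k := by
  refine sum_subset (fun k hk => ?_) (fun k hk hk' => ?_)
  · simp only [mem_Icc, mem_range] at hk ⊢
    have := NeZero.pos N
    omega
  · simp only [mem_Icc, mem_range, not_and_or] at hk hk'
    obtain rfl : k = 0 := by omega
    exact hf

theorem sum_range_natCast_mul_shift_sub (g : ZMod N → ℝ) :
    ∑ k ∈ range N, (k : ℝ) * (g (k + 1) - g k) = N * g 0 - ∑ y : ZMod N, g y := by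
  have abel := sum_range_natCast_mul_sub (fun k : ℕ => g k) N
  push_cast [natCast_self] at abel
  rw [abel, sum_range_natCast (fun y => g (y + 1))]
  exact congrArg (_ - ·) (Equiv.sum_comp (Equiv.addRight (1 : ZMod N)) g)

theorem sum_Icc_div_mul_shift_sub {N : ℕ} [NeZero N] (f : ZMod N → ℝ) :
    ∑ k ∈ Icc 1 (N - 1), ((k : ℝ) / N) * f (k + 1) - ∑ k ∈ Icc 1 (N - 1), ((k : ℝ) / N) * f k =
      f 0 - 1 / N * ∑ y : ZMod N, f y := by
  have hN : (N : ℝ) ≠ 0 := NeZero.ne _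
  rw [← sum_sub_distrib,
    ZMod.sum_Icc_one_pred_natCast (f := fun k : ℕ => (k : ℝ) / N * f (k + 1) - k / N * f k) (by simp)]
  calc ∑ k ∈ range N, ((k : ℝ) / N * f (k + 1) - k / N * f k)
      = 1 / N * ∑ k ∈ range N, (k : ℝ) * (f (k + 1) - f k) := by
        rw [mul_sum]
        exact sum_congr rfl fun _ _ => by ring
    _ = f 0 - 1 / N * ∑ y : ZMod N, f y := by
        rw [ZMod.sum_range_natCast_mul_shift_sub]
        field_simp

end ZMod

section Covariance

variable {N : ℕ} {S : Type*}

def IsTranslationCovariant (j : (ZMod N → S) → ZMod N → ℝ) : Prop :=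
  ∀ (η : ZMod N → S) (z x : ZMod N), j (fun w => η (w - z)) (x + z) = j η x

variable {j : (ZMod N → S) → ZMod N → ℝ}

theorem IsTranslationCovariant.apply_translate_neg (hcov : IsTranslationCovariant j)
    (η : ZMod N → S) (x k : ZMod N) : j (fun w => η (w + x)) k = j η (k + x) := by
  simpa using hcov η (-x) (k + x)

theorem IsTranslationCovariant.sum_translate [NeZero N] (hcov : IsTranslationCovariant j)
    (η : ZMod N → S) (z : ZMod N) : ∑ x, j (fun w => η (w - z)) x = ∑ x, j η x := by
  rw [← Equiv.sum_comp (Equiv.addRight z)]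
  exact sum_congr rfl fun x _ => hcov η z x

end Covariance

theorem stmt_0_general {N : ℕ} [NeZero N] {S : Type*}
    (j : (ZMod N → S) → ZMod N → ℝ)
    (hcov : ∀ (η : ZMod N → S) (z x : ZMod N), j (fun w => η (w - z)) (x + z) = j η x) :
    let C : (ZMod N → S) → ℝ := fun η => (1 / (N : ℝ)) * ∑ x : ZMod N, j η x
    let h : (ZMod N → S) → ℝ :=
      fun η => ∑ k ∈ Finset.Icc 1 (N - 1), ((k : ℝ) / N) * j η ((k : ZMod N))
    (∀ (η : ZMod N → S) (z : ZMod N), C (fun w => η (w - z)) = C η) ∧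
    (∀ (η : ZMod N → S) (x : ZMod N),
      j η x = h (fun w => η (w + (x + 1))) - h (fun w => η (w + x)) + C η) := by
  intro C h
  refine ⟨fun η z => congrArg (1 / (N : ℝ) * ·) (IsTranslationCovariant.sum_translate hcov η z),
    fun η x => ?_⟩
  have h_x : h (fun w => η (w + x)) = ∑ k ∈ Icc 1 (N - 1), ((k : ℝ) / N) * j η (k + x) := by
    simp only [h, IsTranslationCovariant.apply_translate_neg hcov]
  have h_x_add_one : h (fun w => η (w + (x + 1))) =
      ∑ k ∈ Icc 1 (N - 1), ((k : ℝ) / N) * j η (k + 1 + x) := by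
    simp only [h, IsTranslationCovariant.apply_translate_neg hcov, add_comm x 1, add_assoc]
  have shift_sub := ZMod.sum_Icc_div_mul_shift_sub fun y => j η (y + x)
  have sum_shift : ∑ y, j η (y + x) = ∑ y, j η y := Equiv.sum_comp (Equiv.addRight x) (j η)
  rw [zero_add, sum_shift] at shift_sub
  rw [h_x_add_one, h_x, shift_sub]
  simp only [C]
  ring

/-- **Functional Hodge decomposition in dimension one (existence part).**
Let `j` be a translational covariant discrete vector field on the one-dimensional
discrete torus `ZMod N` (`j η x` is the value `j_η(x, x+1)`; covariance means
`j_{τ_z η}(x+z, x+z+1) = j_η(x, x+1)`, where `(τ_z η)(w) = η (w - z)`).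
With `C(η) := (1/N) ∑_x j_η(x,x+1)` and `h(η) := ∑_{x=1}^{N-1} (x/N) j_η(x̄, x̄+1)`,
the function `C` is translational invariant and
`j_η(x,x+1) = τ_{x+1}h(η) - τ_x h(η) + C(η)`, where `τ_x f (η) = f (τ_{-x} η)` and
`(τ_{-x} η)(w) = η (w + x)`. -/
theorem stmt_0 {N : ℕ} [NeZero N] (hN : 2 ≤ N) {S : Type*}
    (j : (ZMod N → S) → ZMod N → ℝ)
    (hcov : ∀ (η : ZMod N → S) (z x : ZMod N), j (fun w => η (w - z)) (x + z) = j η x) :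
    let C : (ZMod N → S) → ℝ := fun η => (1 / (N : ℝ)) * ∑ x : ZMod N, j η x
    let h : (ZMod N → S) → ℝ :=
      fun η => ∑ k ∈ Finset.Icc 1 (N - 1), ((k : ℝ) / N) * j η ((k : ZMod N))
    (∀ (η : ZMod N → S) (z : ZMod N), C (fun w => η (w - z)) = C η) ∧
    (∀ (η : ZMod N → S) (x : ZMod N),
      j η x = h (fun w => η (w + (x + 1))) - h (fun w => η (w + x)) + C η) :=
  stmt_0_general j hcov
end

section
/- Let j be a translational covariant discrete vector field on ZMod N. Suppose h₁, h₂, C₁, C₂ are real-valued functions of the configuration such that for i = 1, 2 and for every configuration η and every x ∈ ZMod N one has j_η(x, x+1) = τ_{x+1}h_i(η) − τ_x h_i(η) + C_i(η). Then C₁(η) = C₂(η) = (1/N) · ∑_{x ∈ ZMod N} j_η(x, x+1) for every η, and the difference h₁ − h₂ is a translational invariant function. -/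
/-- **Functional Hodge decomposition in dimension one (uniqueness part).**
Let `j` be a translational covariant discrete vector field on `ZMod N`
(`j η x` is `j_η(x,x+1)`, covariance: `j_{τ_z η}(x+z, x+z+1) = j_η(x,x+1)` with
`(τ_z η)(w) = η (w - z)`). If `h₁, h₂, C₁, C₂` satisfy
`j_η(x,x+1) = τ_{x+1}h_i(η) - τ_x h_i(η) + C_i(η)` for `i = 1, 2`
(where `τ_x f (η) = f (fun w => η (w + x))`), then
`C₁(η) = C₂(η) = (1/N) ∑_x j_η(x,x+1)` for every `η`, and `h₁ - h₂` is a
translational invariant function. -/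
theorem stmt_1 {N : ℕ} [NeZero N] (hN : 2 ≤ N) {S : Type*}
    (j : (ZMod N → S) → ZMod N → ℝ)
    (hcov : ∀ (η : ZMod N → S) (z x : ZMod N), j (fun w => η (w - z)) (x + z) = j η x)
    (h₁ h₂ C₁ C₂ : (ZMod N → S) → ℝ)
    (hdec₁ : ∀ (η : ZMod N → S) (x : ZMod N),
      j η x = h₁ (fun w => η (w + (x + 1))) - h₁ (fun w => η (w + x)) + C₁ η)
    (hdec₂ : ∀ (η : ZMod N → S) (x : ZMod N),
      j η x = h₂ (fun w => η (w + (x + 1))) - h₂ (fun w => η (w + x)) + C₂ η) :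
    (∀ η : ZMod N → S, C₁ η = (1 / (N : ℝ)) * ∑ x : ZMod N, j η x) ∧
    (∀ η : ZMod N → S, C₂ η = (1 / (N : ℝ)) * ∑ x : ZMod N, j η x) ∧
    (∀ (η : ZMod N → S) (z : ZMod N),
      (h₁ - h₂) (fun w => η (w - z)) = (h₁ - h₂) η) := by
  have hNR : (N : ℝ) ≠ 0 := Nat.cast_ne_zero.mpr (NeZero.ne N)
  have key : ∀ (h C : (ZMod N → S) → ℝ),
      (∀ (η : ZMod N → S) (x : ZMod N),
        j η x = h (fun w => η (w + (x + 1))) - h (fun w => η (w + x)) + C η) →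
      ∀ η : ZMod N → S, C η = (1 / (N : ℝ)) * ∑ x : ZMod N, j η x := by
    intro h C hdec η
    have hsum : ∑ x : ZMod N, j η x = (N : ℝ) * C η := by
      have tel : ∑ x : ZMod N, h (fun w => η (w + (x + 1)))
          = ∑ x : ZMod N, h (fun w => η (w + x)) :=
        Fintype.sum_equiv (Equiv.addRight (1 : ZMod N)) _ _ (fun x => rfl)
      calc ∑ x : ZMod N, j η x
          = ∑ x : ZMod N, (h (fun w => η (w + (x + 1))) - h (fun w => η (w + x)) + C η) := by
            exact Finset.sum_congr rfl fun x _ => hdec η x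
        _ = (∑ x : ZMod N, (h (fun w => η (w + (x + 1))) - h (fun w => η (w + x))))
            + ∑ _x : ZMod N, C η := by rw [Finset.sum_add_distrib]
        _ = (N : ℝ) * C η := by
            rw [Finset.sum_sub_distrib, tel, sub_self, zero_add,
              Finset.sum_const, Finset.card_univ, ZMod.card, nsmul_eq_mul]
    rw [hsum]; field_simp
  have hC₁ := key h₁ C₁ hdec₁
  have hC₂ := key h₂ C₂ hdec₂
  refine ⟨hC₁, hC₂, ?_⟩
  have step : ∀ (η : ZMod N → S) (x : ZMod N),
      (h₁ - h₂) (fun w => η (w + (x + 1))) = (h₁ - h₂) (fun w => η (w + x)) := by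
    intro η x
    have e1 := hdec₁ η x
    have e2 := hdec₂ η x
    have := hC₁ η
    have := hC₂ η
    simp only [Pi.sub_apply]
    linarith
  have nat_step : ∀ (k : ℕ) (η : ZMod N → S),
      (h₁ - h₂) (fun w => η (w + (k : ZMod N))) = (h₁ - h₂) η := by
    intro k
    induction k with
    | zero => intro η; simp
    | succ n ih =>
        intro η
        have : ((n + 1 : ℕ) : ZMod N) = (n : ZMod N) + 1 := by push_cast; ring
        rw [this, step η (n : ZMod N), ih η]
  intro η z
  have : (fun w => η (w - z)) = fun w => η (w + ((-z).val : ZMod N)) := by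
    funext w; rw [ZMod.natCast_val, ZMod.cast_id, sub_eq_add_neg]
  rw [this, nat_step]
end

section
/- Let j be a translational covariant discrete vector field on ZMod N. There exists a real-valued function h of the configuration such that j_η(x, x+1) = τ_{x+1}h(η) − τ_x h(η) for every configuration η and every x ∈ ZMod N (i.e. j is of gradient type, with possibly non-local h) if and only if ∑_{x ∈ ZMod N} j_η(x, x+1) = 0 for every configuration η. -/
/-!
Covariance gives `j η x = j (τ_{-x} η) 0`, so `j` is a gradient as soon as `g η = j η 0` is a
coboundary `h ∘ T - h` for the unit shift `T η = η (· + 1)`. As `T^[N] = id` and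
`∑_{i<N} g (T^[i] η) = ∑_x j η x`, this is the fact that a function with vanishing orbit sums under
a periodic map is a coboundary, witnessed by the weighted average `h = N⁻¹ ∑_{i<N} i • g ∘ T^[i]`
(summation by parts). The converse is telescoping.
-/

open Finset

theorem Finset.sum_range_nsmul_sub {M : Type*} [AddCommGroup M] (u : ℕ → M) (n : ℕ) :
    ∑ i ∈ range n, i • (u (i + 1) - u i) = n • u n - ∑ i ∈ range n, u (i + 1) := by
  induction n with
  | zero => simp
  | succ n ih =>
    rw [sum_range_succ, ih, sum_range_succ, succ_nsmul, smul_sub]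
    abel

theorem exists_coboundary_of_sum_iterate_eq_zero {X K : Type*} [DivisionRing K] [CharZero K]
    {T : X → X} {n : ℕ} (hn : n ≠ 0) (hT : ∀ x, T^[n] x = x) {g : X → K}
    (hg : ∀ x, ∑ i ∈ range n, g (T^[i] x) = 0) :
    ∃ h : X → K, ∀ x, g x = h (T x) - h x := by
  refine ⟨fun x => (n : K)⁻¹ * ∑ i ∈ range n, i • g (T^[i] x), fun x => ?_⟩
  have hsum : ∑ i ∈ range n, i • (g (T^[i + 1] x) - g (T^[i] x)) = n • g x := by
    rw [sum_range_nsmul_sub (fun i => g (T^[i] x)), hT]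
    simp only [Function.iterate_succ_apply, hg, sub_zero]
  have hn' : (n : K) ≠ 0 := Nat.cast_ne_zero.mpr hn
  simp only [← Function.iterate_succ_apply]
  rw [← mul_sub, ← sum_sub_distrib]
  simp only [← smul_sub]
  rw [hsum, nsmul_eq_mul, inv_mul_cancel_left₀ hn']

theorem ZMod.sum_univ_eq_sum_range {N : ℕ} [NeZero N] {M : Type*} [AddCommMonoid M]
    (f : ZMod N → M) : ∑ x, f x = ∑ i ∈ range N, f i :=
  sum_nbij' ZMod.val Nat.cast (fun x _ => mem_range.mpr (ZMod.val_lt x)) (fun _ _ => mem_univ _)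
    (fun x _ => ZMod.natCast_zmod_val x) (fun _ hi => ZMod.val_cast_of_lt (mem_range.mp hi))
    (fun x _ => by rw [ZMod.natCast_zmod_val])

theorem iterate_comp_add_one {G S : Type*} [AddMonoidWithOne G] (i : ℕ) (η : G → S) :
    (fun (ξ : G → S) w => ξ (w + 1))^[i] η = fun w => η (w + i) := by
  induction i generalizing η with
  | zero => simp
  | succ i ih => rw [Function.iterate_succ_apply, ih]; simp only [Nat.cast_succ, add_assoc]

theorem stmt_2_general {N : ℕ} [NeZero N] {S : Type*}
    (j : (ZMod N → S) → ZMod N → ℝ)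
    (hcov : ∀ (η : ZMod N → S) (z x : ZMod N), j (fun w => η (w - z)) (x + z) = j η x) :
    (∃ h : (ZMod N → S) → ℝ, ∀ (η : ZMod N → S) (x : ZMod N),
        j η x = h (fun w => η (w + (x + 1))) - h (fun w => η (w + x)))
      ↔ (∀ η : ZMod N → S, ∑ x : ZMod N, j η x = 0) := by
  have hshift : ∀ η (a y : ZMod N), j (fun w => η (w + a)) y = j η (y + a) := fun η a y => by
    simpa using hcov η (-a) (y + a)
  constructor
  · rintro ⟨h, hh⟩ η
    simp_rw [hh η, sum_sub_distrib]
    exact sub_eq_zero.mpr (Fintype.sum_equiv (Equiv.addRight 1) _ _ fun _ => rfl)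
  · intro hsum
    obtain ⟨h, hh⟩ := exists_coboundary_of_sum_iterate_eq_zero (T := fun η w => η (w + 1))
      (g := fun η => j η 0) (NeZero.ne N) (fun η => by simp [iterate_comp_add_one]) fun η => by
        simp only [iterate_comp_add_one, hshift, zero_add, ← ZMod.sum_univ_eq_sum_range, hsum]
    refine ⟨h, fun η x => ?_⟩
    calc j η x = j (fun w => η (w + x)) 0 := by rw [hshift, zero_add]
      _ = h (fun w => η (w + (x + 1))) - h (fun w => η (w + x)) := by
        rw [hh]
        simp only [add_assoc, add_comm 1 x]

/-- **Gradient criterion in dimension one.**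
A translational covariant discrete vector field `j` on `ZMod N`
(`j η x` is `j_η(x,x+1)`, covariance: `j_{τ_z η}(x+z, x+z+1) = j_η(x,x+1)` with
`(τ_z η)(w) = η (w - z)`) is of gradient type, i.e. there exists a (possibly
non-local) function `h` of the configuration with
`j_η(x,x+1) = τ_{x+1}h(η) - τ_x h(η)` (where `τ_x f (η) = f (fun w => η (w + x))`),
if and only if `∑_{x ∈ ZMod N} j_η(x,x+1) = 0` for every configuration `η`. -/
theorem stmt_2 {N : ℕ} [NeZero N] (hN : 2 ≤ N) {S : Type*}
    (j : (ZMod N → S) → ZMod N → ℝ)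
    (hcov : ∀ (η : ZMod N → S) (z x : ZMod N), j (fun w => η (w - z)) (x + z) = j η x) :
    (∃ h : (ZMod N → S) → ℝ, ∀ (η : ZMod N → S) (x : ZMod N),
        j η x = h (fun w => η (w + (x + 1))) - h (fun w => η (w + x)))
      ↔ (∀ η : ZMod N → S, ∑ x : ZMod N, j η x = 0) :=
  stmt_2_general j hcov
end

section
/- Let j be a translational covariant discrete vector field on the two-dimensional discrete torus V_N = (ZMod N)². Then there exist real-valued functions h, g, C¹, C² of the configuration such that for every configuration η and every x ∈ V_N: j_η(x, x+e¹) = τ_{x+e¹}h(η) − τ_x h(η) + τ_x g(η) − τ_{x−e²} g(η) + C¹(η) and j_η(x, x+e²) = τ_{x+e²}h(η) − τ_x h(η) + τ_{x−e¹} g(η) − τ_x g(η) + C²(η). Moreover C^i(η) = (1/N²) · ∑_{x ∈ V_N} j_η(x, x+e^i) for i = 1, 2, and C¹, C² are translational invariant. -/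
/-!
On a finite abelian group `T` generated by `a` and `b` there is a kernel `α` with
`Δα = δ₀ - 1/|T|`: on zero-sum functions `Δ` is injective (a harmonic function is constant
along the generators from any maximum point), hence surjective. Convolving the observables
`jᵢ(η) = j_η(0, 0 + eᵢ)` with `α` along translations yields `Fᵢ` with `Δ Fᵢ = jᵢ - Cᵢ`, where
`Cᵢ` is the translation average of `jᵢ`, i.e. by covariance the spatial average of
`j_η(x, x + eᵢ)`. Because one kernel serves every configuration, `h = div (F₁, F₂)` and
`g = curl (F₁, F₂)` are again functions of the configuration, and `Δ = d δ + δ d` for the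
commuting difference operators along `a` and `b` gives the decomposition.
-/

open Finset

namespace DiscreteTorus

section Lattice

variable {T : Type*} [AddCommGroup T] (a b : T)

def laplacian (φ : T → ℝ) (x : T) : ℝ :=
  φ (x + a) + φ (x - a) + φ (x + b) + φ (x - b) - 4 * φ x

def divergence (φ ψ : T → ℝ) (x : T) : ℝ :=
  φ x - φ (x - a) + ψ x - ψ (x - b)

def curl (φ ψ : T → ℝ) (x : T) : ℝ :=
  φ (x + b) - φ x - ψ (x + a) + ψ x

theorem laplacian_fst_eq (φ ψ : T → ℝ) (x : T) :
    laplacian a b φ x = divergence a b φ ψ (x + a) - divergence a b φ ψ x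
      + curl a b φ ψ x - curl a b φ ψ (x - b) := by
  simp only [laplacian, divergence, curl, add_sub_cancel_right, sub_add_cancel,
    sub_add_eq_add_sub]
  ring

theorem laplacian_snd_eq (φ ψ : T → ℝ) (x : T) :
    laplacian a b ψ x = divergence a b φ ψ (x + b) - divergence a b φ ψ x
      + curl a b φ ψ (x - a) - curl a b φ ψ x := by
  simp only [laplacian, divergence, curl, add_sub_cancel_right, sub_add_cancel,
    sub_add_eq_add_sub]
  ring

theorem divergence_comp_add_right (φ ψ : T → ℝ) (x : T) :
    divergence a b (fun y => φ (y + x)) (fun y => ψ (y + x)) 0 = divergence a b φ ψ x := by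
  simp only [divergence, zero_add, zero_sub, neg_add_eq_sub]

theorem curl_comp_add_right (φ ψ : T → ℝ) (x : T) :
    curl a b (fun y => φ (y + x)) (fun y => ψ (y + x)) 0 = curl a b φ ψ x := by
  simp only [curl, zero_add, add_zero, add_comm _ x]

theorem sum_laplacian [Fintype T] (φ : T → ℝ) : ∑ x, laplacian a b φ x = 0 := by
  have sum_comp_add : ∀ c, ∑ x, φ (x + c) = ∑ x, φ x :=
    fun c => Fintype.sum_equiv (Equiv.addRight c) _ _ fun _ => rfl
  have sum_comp_sub : ∀ c, ∑ x, φ (x - c) = ∑ x, φ x :=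
    fun c => Fintype.sum_equiv (Equiv.subRight c) _ _ fun _ => rfl
  simp only [laplacian, sum_sub_distrib, sum_add_distrib, sum_comp_add, sum_comp_sub, ← mul_sum]
  ring

variable {a b}

theorem eq_of_laplacian_eq_zero [Finite T] (hab : AddSubgroup.closure {a, b} = ⊤)
    {φ : T → ℝ} (hφ : ∀ x, laplacian a b φ x = 0) (x y : T) : φ x = φ y := by
  obtain ⟨z₀, hz₀⟩ := Finite.exists_max φ
  have neighbours : ∀ z, φ z = φ z₀ → φ (z + a) = φ z₀ ∧ φ (z + -a) = φ z₀ ∧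
      φ (z + b) = φ z₀ ∧ φ (z + -b) = φ z₀ := by
    intro z hz
    have harmonic := hφ z
    simp only [laplacian, ← sub_eq_add_neg] at harmonic ⊢
    refine ⟨?_, ?_, ?_, ?_⟩ <;> linarith [hz₀ (z + a), hz₀ (z - a), hz₀ (z + b), hz₀ (z - b)]
  have steps : ∀ v, ∀ z, φ z = φ z₀ → φ (z + v) = φ z₀ := by
    intro v
    induction hab ▸ AddSubgroup.mem_top v using AddSubgroup.closure_induction'' with
    | mem v hv =>
      rcases hv with rfl | rfl
      exacts [fun z hz => (neighbours z hz).1, fun z hz => (neighbours z hz).2.2.1]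
    | neg_mem v hv =>
      rcases hv with rfl | rfl
      exacts [fun z hz => (neighbours z hz).2.1, fun z hz => (neighbours z hz).2.2.2]
    | zero => simp
    | add v w _ _ hv hw => exact fun z hz => add_assoc z v w ▸ hw _ (hv z hz)
  have hconst : ∀ y, φ y = φ z₀ := fun y => by simpa using steps (y - z₀) z₀ rfl
  rw [hconst x, hconst y]

theorem exists_laplacian_eq_indicator_sub [Fintype T] [DecidableEq T]
    (hab : AddSubgroup.closure {a, b} = ⊤) :
    ∃ α : T → ℝ, ∀ x, laplacian a b α x = (if x = 0 then 1 else 0) - 1 / Fintype.card T := by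
  let total : (T → ℝ) →ₗ[ℝ] ℝ := ∑ x, LinearMap.proj x
  have total_apply : ∀ φ, total φ = ∑ x, φ x := fun φ => by simp [total]
  let Δ : (T → ℝ) →ₗ[ℝ] (T → ℝ) :=
    { toFun := laplacian a b
      map_add' := fun φ ψ => by
        ext x
        simp only [laplacian, Pi.add_apply]
        ring
      map_smul' := fun c φ => by
        ext x
        simp only [laplacian, Pi.smul_apply, smul_eq_mul, RingHom.id_apply]
        ring }
  let Δ₀ : LinearMap.ker total →ₗ[ℝ] LinearMap.ker total :=
    Δ.restrict fun φ _ => by rw [LinearMap.mem_ker, total_apply]; exact sum_laplacian a b φ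
  have hcard : (Fintype.card T : ℝ) ≠ 0 := Nat.cast_ne_zero.mpr Fintype.card_ne_zero
  have injective : Function.Injective Δ₀ := by
    rw [injective_iff_map_eq_zero]
    rintro ⟨φ, hφ⟩ hΔφ
    have harmonic : ∀ x, laplacian a b φ x = 0 := fun x => congrFun (congrArg Subtype.val hΔφ) x
    have hconst : ∀ x, φ x = φ 0 := fun x => eq_of_laplacian_eq_zero hab harmonic x 0
    have hsum : ∑ x, φ x = Fintype.card T * φ 0 := by simp [hconst]
    rw [LinearMap.mem_ker, total_apply, hsum] at hφ
    ext x
    simp [hconst x, (mul_eq_zero.mp hφ).resolve_left hcard]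
  have target_mem : (fun x : T => (if x = 0 then (1 : ℝ) else 0) - 1 / Fintype.card T) ∈
      LinearMap.ker total := by
    rw [LinearMap.mem_ker, total_apply, sum_sub_distrib]
    simp [hcard]
  obtain ⟨⟨α, _⟩, hα⟩ := LinearMap.injective_iff_surjective.mp injective ⟨_, target_mem⟩
  exact ⟨α, fun x => congrFun (congrArg Subtype.val hα) x⟩

end Lattice

section Configurations

variable {T : Type*} [AddCommGroup T] {S : Type*}

/-- `F (shift x η)` is `τ_x F (η)` in the notation of the statement. -/
def shift (x : T) (η : T → S) : T → S := fun w => η (w + x)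

theorem shift_shift (x y : T) (η : T → S) : shift y (shift x η) = shift (y + x) η := by
  funext w
  simp only [shift, add_assoc]

theorem shift_zero (η : T → S) : shift 0 η = η := by
  funext w
  simp only [shift, add_zero]

def convolve [Fintype T] (α : T → ℝ) (F : (T → S) → ℝ) (η : T → S) : ℝ :=
  ∑ z, α z * F (shift z η)

theorem convolve_shift [Fintype T] (α : T → ℝ) (F : (T → S) → ℝ) (x : T) (η : T → S) :
    convolve α F (shift x η) = ∑ z, α (z - x) * F (shift z η) :=
  Fintype.sum_equiv (Equiv.addRight x) _ _ fun z => by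
    simp only [shift_shift, Equiv.coe_addRight, add_sub_cancel_right]

theorem laplacian_convolve_shift [Fintype T] (a b : T) (α : T → ℝ) (F : (T → S) → ℝ)
    (η : T → S) (x : T) :
    laplacian a b (fun y => convolve α F (shift y η)) x
      = convolve (laplacian a b α) F (shift x η) := by
  simp only [laplacian, convolve_shift, mul_sum, ← sum_add_distrib, ← sum_sub_distrib]
  refine sum_congr rfl fun z _ => ?_
  have sub_sub_eq : ∀ c, z - (x - c) = z - x + c := fun c => by abel
  simp only [sub_add_eq_sub_sub, sub_sub_eq]
  ring

theorem exists_laplacian_convolve_eq [Fintype T] [DecidableEq T] {a b : T}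
    (hab : AddSubgroup.closure {a, b} = ⊤) :
    ∃ α : T → ℝ, ∀ (F : (T → S) → ℝ) (η : T → S) (x : T),
      laplacian a b (fun y => convolve α F (shift y η)) x
        = F (shift x η) - 1 / Fintype.card T * ∑ z, F (shift z (shift x η)) := by
  obtain ⟨α, hα⟩ := exists_laplacian_eq_indicator_sub hab
  refine ⟨α, fun F η x => ?_⟩
  rw [laplacian_convolve_shift]
  simp only [convolve, hα, sub_mul, sum_sub_distrib, ite_mul, one_mul,
    zero_mul, sum_ite_eq', mem_univ, if_true, shift_zero, ← mul_sum]

def IsTranslationCovariant {ι : Type*} (j : (T → S) → T → ι → ℝ) : Prop :=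
  ∀ (η : T → S) (z x : T) (i : ι), j (fun w => η (w - z)) (x + z) i = j η x i

namespace IsTranslationCovariant

variable {ι : Type*} {j : (T → S) → T → ι → ℝ}

theorem apply_add (hj : IsTranslationCovariant j) (η : T → S) (x y : T) (i : ι) :
    j η (y + x) i = j (shift x η) y i := by
  have hη : (fun w => shift x η (w - x)) = η := funext fun w => by simp only [shift, sub_add_cancel]
  rw [← hj (shift x η) x y i, hη]

theorem apply_eq (hj : IsTranslationCovariant j) (η : T → S) (x : T) (i : ι) :
    j η x i = j (shift x η) 0 i := by
  rw [← hj.apply_add, zero_add]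

theorem sum_shift [Fintype T] (hj : IsTranslationCovariant j) (η : T → S) (x : T) (i : ι) :
    ∑ y, j (shift x η) y i = ∑ y, j η y i :=
  Fintype.sum_equiv (Equiv.addRight x) _ _ fun y => (hj.apply_add η x y i).symm

theorem sum_translate [Fintype T] (hj : IsTranslationCovariant j) (η : T → S) (z : T) (i : ι) :
    ∑ x, j (fun w => η (w - z)) x i = ∑ x, j η x i :=
  (Fintype.sum_equiv (Equiv.addRight z) _ _ fun _ => rfl).symm.trans
    (sum_congr rfl fun x _ => hj η z x i)

end IsTranslationCovariant

theorem exists_hodge_decomposition [Fintype T] [DecidableEq T] {a b : T}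
    (hab : AddSubgroup.closure {a, b} = ⊤) {j : (T → S) → T → Fin 2 → ℝ}
    (hj : IsTranslationCovariant j) :
    ∃ h g : (T → S) → ℝ, ∀ (η : T → S) (x : T),
      j η x 0 = h (shift (x + a) η) - h (shift x η) + g (shift x η) - g (shift (x - b) η)
        + 1 / Fintype.card T * ∑ y, j η y 0 ∧
      j η x 1 = h (shift (x + b) η) - h (shift x η) + g (shift (x - a) η) - g (shift x η)
        + 1 / Fintype.card T * ∑ y, j η y 1 := by
  obtain ⟨α, hα⟩ := exists_laplacian_convolve_eq (S := S) hab
  let orbit (i : Fin 2) (η : T → S) : T → ℝ :=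
    fun y => convolve α (fun ξ => j ξ 0 i) (shift y η)
  have poisson : ∀ i η x,
      laplacian a b (orbit i η) x = j η x i - 1 / Fintype.card T * ∑ y, j η y i := by
    intro i η x
    simp only [orbit, hα, ← hj.apply_eq, hj.sum_shift]
  have orbit_shift : ∀ i η x, orbit i (shift x η) = fun y => orbit i η (y + x) := by
    intro i η x
    funext y
    simp only [orbit, shift_shift]
  let h (η : T → S) : ℝ := divergence a b (orbit 0 η) (orbit 1 η) 0
  let g (η : T → S) : ℝ := curl a b (orbit 0 η) (orbit 1 η) 0
  have h_shift : ∀ η x, h (shift x η) = divergence a b (orbit 0 η) (orbit 1 η) x := by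
    intro η x
    simp only [h, orbit_shift]
    exact divergence_comp_add_right a b _ _ x
  have g_shift : ∀ η x, g (shift x η) = curl a b (orbit 0 η) (orbit 1 η) x := by
    intro η x
    simp only [g, orbit_shift]
    exact curl_comp_add_right a b _ _ x
  refine ⟨h, g, fun η x => ⟨?_, ?_⟩⟩
  · rw [h_shift, h_shift, g_shift, g_shift, ← laplacian_fst_eq, poisson]
    ring
  · rw [h_shift, h_shift, g_shift, g_shift, ← laplacian_snd_eq, poisson]
    ring

end Configurations

theorem closure_basis_eq_top (N : ℕ) [NeZero N] :
    AddSubgroup.closure {((1 : ZMod N), (0 : ZMod N)), (0, 1)} = ⊤ := by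
  refine eq_top_iff.mpr fun ⟨x, y⟩ _ => ?_
  have hxy : ((x, y) : ZMod N × ZMod N) = x.val • (1, 0) + y.val • (0, 1) := by
    ext <;> simp
  rw [hxy]
  exact add_mem (nsmul_mem (AddSubgroup.subset_closure (by simp)) _)
    (nsmul_mem (AddSubgroup.subset_closure (by simp)) _)

end DiscreteTorus

theorem stmt_3_general {N : ℕ} [NeZero N] {S : Type*}
    (j : ((ZMod N × ZMod N) → S) → (ZMod N × ZMod N) → Fin 2 → ℝ)
    (hcov : ∀ (η : (ZMod N × ZMod N) → S) (z x : ZMod N × ZMod N) (i : Fin 2),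
      j (fun w => η (w - z)) (x + z) i = j η x i) :
    ∃ h g C1 C2 : ((ZMod N × ZMod N) → S) → ℝ,
      (∀ (η : (ZMod N × ZMod N) → S) (x : ZMod N × ZMod N),
        j η x 0 = h (fun w => η (w + (x + (1, 0)))) - h (fun w => η (w + x))
          + g (fun w => η (w + x)) - g (fun w => η (w + (x - (0, 1)))) + C1 η) ∧
      (∀ (η : (ZMod N × ZMod N) → S) (x : ZMod N × ZMod N),
        j η x 1 = h (fun w => η (w + (x + (0, 1)))) - h (fun w => η (w + x))
          + g (fun w => η (w + (x - (1, 0)))) - g (fun w => η (w + x)) + C2 η) ∧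
      (∀ η : (ZMod N × ZMod N) → S,
        C1 η = (1 / (N : ℝ) ^ 2) * ∑ x : ZMod N × ZMod N, j η x 0) ∧
      (∀ η : (ZMod N × ZMod N) → S,
        C2 η = (1 / (N : ℝ) ^ 2) * ∑ x : ZMod N × ZMod N, j η x 1) ∧
      (∀ (η : (ZMod N × ZMod N) → S) (z : ZMod N × ZMod N),
        C1 (fun w => η (w - z)) = C1 η) ∧
      (∀ (η : (ZMod N × ZMod N) → S) (z : ZMod N × ZMod N),
        C2 (fun w => η (w - z)) = C2 η) := by
  have hj : DiscreteTorus.IsTranslationCovariant j := hcov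
  obtain ⟨h, g, hhodge⟩ := DiscreteTorus.exists_hodge_decomposition
    (DiscreteTorus.closure_basis_eq_top N) hj
  have hcard : (Fintype.card (ZMod N × ZMod N) : ℝ) = (N : ℝ) ^ 2 := by
    simp [ZMod.card, sq]
  rw [hcard] at hhodge
  refine ⟨h, g, fun η => 1 / (N : ℝ) ^ 2 * ∑ x, j η x 0, fun η => 1 / (N : ℝ) ^ 2 * ∑ x, j η x 1,
    fun η x => (hhodge η x).1, fun η x => (hhodge η x).2, fun _ => rfl, fun _ => rfl,
    fun η z => ?_, fun η z => ?_⟩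
  · exact congrArg (1 / (N : ℝ) ^ 2 * ·) (hj.sum_translate η z 0)
  · exact congrArg (1 / (N : ℝ) ^ 2 * ·) (hj.sum_translate η z 1)

/-- **Functional Hodge decomposition in dimension two (existence part).**
Let `j` be a translational covariant discrete vector field on the two-dimensional
discrete torus `V_N = (ZMod N)²`: `j η x i` is the value `j_η(x, x+eⁱ⁺¹)` on the
oriented edge from `x` in direction `i` (`i = 0` for `e¹ = (1,0)`, `i = 1` for
`e² = (0,1)`), and covariance means `j_{τ_z η}(x+z, y+z) = j_η(x, y)` with
`(τ_z η)(w) = η (w - z)`. Then there exist functions `h, g, C¹, C²` of the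
configuration such that (with `τ_x f (η) = f (fun w => η (w + x))`, and the face
translations `τ_{𝔣⁺(x,x+e¹)} = τ_x`, `τ_{𝔣⁻(x,x+e¹)} = τ_{x-e²}`,
`τ_{𝔣⁺(x,x+e²)} = τ_{x-e¹}`, `τ_{𝔣⁻(x,x+e²)} = τ_x`):
`j_η(x,x+e¹) = τ_{x+e¹}h(η) - τ_x h(η) + τ_x g(η) - τ_{x-e²}g(η) + C¹(η)` and
`j_η(x,x+e²) = τ_{x+e²}h(η) - τ_x h(η) + τ_{x-e¹}g(η) - τ_x g(η) + C²(η)`.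
Moreover `Cⁱ(η) = (1/N²) ∑_x j_η(x, x+eⁱ)` and `C¹, C²` are translational
invariant. -/
theorem stmt_3 {N : ℕ} [NeZero N] (hN : 3 ≤ N) {S : Type*}
    (j : ((ZMod N × ZMod N) → S) → (ZMod N × ZMod N) → Fin 2 → ℝ)
    (hcov : ∀ (η : (ZMod N × ZMod N) → S) (z x : ZMod N × ZMod N) (i : Fin 2),
      j (fun w => η (w - z)) (x + z) i = j η x i) :
    ∃ h g C1 C2 : ((ZMod N × ZMod N) → S) → ℝ,
      (∀ (η : (ZMod N × ZMod N) → S) (x : ZMod N × ZMod N),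
        j η x 0 = h (fun w => η (w + (x + (1, 0)))) - h (fun w => η (w + x))
          + g (fun w => η (w + x)) - g (fun w => η (w + (x - (0, 1)))) + C1 η) ∧
      (∀ (η : (ZMod N × ZMod N) → S) (x : ZMod N × ZMod N),
        j η x 1 = h (fun w => η (w + (x + (0, 1)))) - h (fun w => η (w + x))
          + g (fun w => η (w + (x - (1, 0)))) - g (fun w => η (w + x)) + C2 η) ∧
      (∀ η : (ZMod N × ZMod N) → S,
        C1 η = (1 / (N : ℝ) ^ 2) * ∑ x : ZMod N × ZMod N, j η x 0) ∧
      (∀ η : (ZMod N × ZMod N) → S,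
        C2 η = (1 / (N : ℝ) ^ 2) * ∑ x : ZMod N × ZMod N, j η x 1) ∧
      (∀ (η : (ZMod N × ZMod N) → S) (z : ZMod N × ZMod N),
        C1 (fun w => η (w - z)) = C1 η) ∧
      (∀ (η : (ZMod N × ZMod N) → S) (z : ZMod N × ZMod N),
        C2 (fun w => η (w - z)) = C2 η) :=
  stmt_3_general j hcov
end

section
/- Let j be a translational covariant discrete vector field on V_N = (ZMod N)². Suppose (h₁, g₁, C₁¹, C₁²) and (h₂, g₂, C₂¹, C₂²) are two quadruples of real-valued functions of the configuration that both satisfy, for every configuration η and every x ∈ V_N, j_η(x, x+e¹) = τ_{x+e¹}h_i(η) − τ_x h_i(η) + τ_x g_i(η) − τ_{x−e²} g_i(η) + C_i¹(η) and j_η(x, x+e²) = τ_{x+e²}h_i(η) − τ_x h_i(η) + τ_{x−e¹} g_i(η) − τ_x g_i(η) + C_i²(η), where C_i¹, C_i² are translational invariant. Then C₁¹ = C₂¹, C₁² = C₂², and the differences h₁ − h₂ and g₁ − g₂ are translational invariant functions. -/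
/-!
Fix a configuration `η` and put `F x = τ_x (h₁ - h₂) η`, `G x = τ_x (g₁ - g₂) η`. Subtracting the
two decompositions gives the discrete Cauchy–Riemann system `∇F + ∇^⊥G + c = 0` on the torus, with
`c = (C₁¹ - C₂¹, C₁² - C₂²)(η)`. Summing over the torus kills the difference terms, so `c = 0`.
Then `G` is harmonic, and summation by parts, `∑ G ΔG = -∑ |∇G|²`, forces `∇G = 0`, whence
`∇F = 0`. Since `e¹, e²` generate the torus, `F` and `G` are constant, which is the translation
invariance of `h₁ - h₂` and `g₁ - g₂`.
-/

open Finset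

section Periods

variable {A β : Type*} [AddCommGroup A]

def periods (f : A → β) : AddSubgroup A where
  carrier := {a | ∀ x, f (x + a) = f x}
  zero_mem' := by simp
  add_mem' {a b} ha hb x := by rw [← add_assoc, hb, ha]
  neg_mem' {a} ha x := by rw [← ha (x + -a), neg_add_cancel_right]

theorem apply_eq_apply_zero_of_closure_eq_top {f : A → β} {a b : A}
    (hab : AddSubgroup.closure {a, b} = ⊤) (ha : ∀ x, f (x + a) = f x)
    (hb : ∀ x, f (x + b) = f x) (x : A) : f x = f 0 := by
  have hle : AddSubgroup.closure {a, b} ≤ periods f :=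
    (AddSubgroup.closure_le _).mpr (Set.insert_subset ha (Set.singleton_subset_iff.mpr hb))
  have hx : x ∈ periods f := hle (hab ▸ AddSubgroup.mem_top x)
  simpa using hx 0

end Periods

theorem ZMod.closure_prod_basis_eq_top (N : ℕ) :
    AddSubgroup.closure {((1, 0) : ZMod N × ZMod N), (0, 1)} = ⊤ := by
  refine (AddSubgroup.eq_top_iff' _).mpr fun x => ?_
  have hx : x = (x.1.cast : ℤ) • ((1, 0) : ZMod N × ZMod N) + (x.2.cast : ℤ) • (0, 1) := by
    ext <;> simp
  rw [hx]
  exact add_mem (zsmul_mem (AddSubgroup.subset_closure (by simp)) _)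
    (zsmul_mem (AddSubgroup.subset_closure (by simp)) _)

section FiniteGroup

variable {A : Type*} [AddCommGroup A]

theorem harmonic_of_grad_add_rotGrad_eq_zero {F G : A → ℝ} {a b : A}
    (h₁ : ∀ x, F (x + a) - F x + (G x - G (x - b)) = 0)
    (h₂ : ∀ x, F (x + b) - F x + (G (x - a) - G x) = 0) (x : A) :
    G (x + a) + G (x - a) + G (x + b) + G (x - b) = 4 * G x := by
  have h₁' := h₁ (x + b)
  have h₂' := h₂ (x + a)
  rw [add_right_comm, add_sub_cancel_right] at h₁'
  rw [add_sub_cancel_right] at h₂'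
  linarith [h₁ x, h₂ x]

variable [Fintype A]

theorem sum_comp_add_right (u : A → ℝ) (a : A) : ∑ x, u (x + a) = ∑ x, u x :=
  Fintype.sum_equiv (Equiv.addRight a) _ u fun _ => rfl

theorem sum_comp_add_sub_comp_add (u : A → ℝ) (a b : A) :
    ∑ x, (u (x + a) - u (x + b)) = 0 := by
  rw [sum_sub_distrib, sum_comp_add_right, sum_comp_add_right, sub_self]

theorem const_eq_zero_of_forall_add_sub_add {u v : A → ℝ} {a b d : A} {c : ℝ}
    (h : ∀ x, u (x + a) - u x + (v (x + b) - v (x + d)) + c = 0) : c = 0 := by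
  have hsum : ∑ x, (u (x + a) - u (x + 0) + (v (x + b) - v (x + d)) + c) = 0 := by
    simpa only [add_zero] using sum_eq_zero fun x _ => h x
  rw [sum_add_distrib, sum_add_distrib, sum_comp_add_sub_comp_add, sum_comp_add_sub_comp_add,
    sum_const, card_univ, nsmul_eq_mul, zero_add, zero_add] at hsum
  exact (mul_eq_zero.mp hsum).resolve_left (Nat.cast_ne_zero.mpr Fintype.card_ne_zero)

theorem sum_mul_secondDiff_eq_neg_sum_sq (G : A → ℝ) (a : A) :
    ∑ x, G x * (G (x + a) + G (x - a) - 2 * G x) = -∑ x, (G (x + a) - G x) ^ 2 := by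
  have hback : ∑ x, G x * G (x - a) = ∑ x, G (x + a) * G x := by
    simpa only [add_sub_cancel_right] using (sum_comp_add_right (fun x => G x * G (x - a)) a).symm
  have hsq : ∑ x, G (x + a) ^ 2 = ∑ x, G x ^ 2 := sum_comp_add_right (G · ^ 2) a
  calc ∑ x, G x * (G (x + a) + G (x - a) - 2 * G x)
      = ∑ x, ((G x * G (x - a) - G (x + a) * G x) + (G (x + a) ^ 2 - G x ^ 2)
          - (G (x + a) - G x) ^ 2) := sum_congr rfl fun x _ => by ring
    _ = -∑ x, (G (x + a) - G x) ^ 2 := by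
      rw [sum_sub_distrib, sum_add_distrib, sum_sub_distrib, sum_sub_distrib, hback, hsq]
      ring

theorem periodic_of_harmonic {G : A → ℝ} {a b : A}
    (hG : ∀ x, G (x + a) + G (x - a) + G (x + b) + G (x - b) = 4 * G x) :
    (∀ x, G (x + a) = G x) ∧ ∀ x, G (x + b) = G x := by
  have henergy : ∑ x, ((G (x + a) - G x) ^ 2 + (G (x + b) - G x) ^ 2) = 0 := by
    have hzero : ∑ x, (G x * (G (x + a) + G (x - a) - 2 * G x)
        + G x * (G (x + b) + G (x - b) - 2 * G x)) = 0 :=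
      sum_eq_zero fun x _ => by linear_combination G x * hG x
    rw [sum_add_distrib, sum_mul_secondDiff_eq_neg_sum_sq, sum_mul_secondDiff_eq_neg_sum_sq]
      at hzero
    rw [sum_add_distrib]
    linarith
  have hterm := (sum_eq_zero_iff_of_nonneg fun x _ => by positivity).mp henergy
  refine ⟨fun x => ?_, fun x => ?_⟩ <;>
  · have := hterm x (mem_univ x)
    nlinarith [sq_nonneg (G (x + a) - G x), sq_nonneg (G (x + b) - G x)]

theorem trivial_of_grad_add_rotGrad_add_const_eq_zero {F G : A → ℝ} {a b : A} {c₁ c₂ : ℝ}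
    (hab : AddSubgroup.closure {a, b} = ⊤)
    (h₁ : ∀ x, F (x + a) - F x + (G x - G (x - b)) + c₁ = 0)
    (h₂ : ∀ x, F (x + b) - F x + (G (x - a) - G x) + c₂ = 0) :
    c₁ = 0 ∧ c₂ = 0 ∧ (∀ x, F x = F 0) ∧ ∀ x, G x = G 0 := by
  obtain rfl : c₁ = 0 := const_eq_zero_of_forall_add_sub_add (u := F) (a := a) (b := 0) (d := -b)
    fun x => by simpa only [add_zero, ← sub_eq_add_neg] using h₁ x
  obtain rfl : c₂ = 0 := const_eq_zero_of_forall_add_sub_add (u := F) (a := b) (b := -a) (d := 0)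
    fun x => by simpa only [add_zero, ← sub_eq_add_neg] using h₂ x
  simp only [add_zero] at h₁ h₂
  obtain ⟨hGa, hGb⟩ := periodic_of_harmonic (harmonic_of_grad_add_rotGrad_eq_zero h₁ h₂)
  have hFa (x : A) : F (x + a) = F x := by
    have hG := hGb (x - b)
    rw [sub_add_cancel] at hG
    linarith [h₁ x]
  have hFb (x : A) : F (x + b) = F x := by
    have hG := hGa (x - a)
    rw [sub_add_cancel] at hG
    linarith [h₂ x]
  exact ⟨rfl, rfl, apply_eq_apply_zero_of_closure_eq_top hab hFa hFb,
    apply_eq_apply_zero_of_closure_eq_top hab hGa hGb⟩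

end FiniteGroup


/-- `translates f η x = τ_x f (η)`. -/
def translates {A S : Type*} [Add A] (f : (A → S) → ℝ) (η : A → S) (x : A) : ℝ :=
  f fun w => η (w + x)

theorem apply_comp_sub_eq_of_translates_const {A S : Type*} [AddGroup A] {f : (A → S) → ℝ}
    {η : A → S} (hf : ∀ x, translates f η x = translates f η 0) (z : A) :
    f (fun w => η (w - z)) = f η := by
  simpa only [translates, sub_eq_add_neg, add_zero] using hf (-z)

theorem stmt_4_general {N : ℕ} [NeZero N] {S : Type*}
    (j : ((ZMod N × ZMod N) → S) → (ZMod N × ZMod N) → Fin 2 → ℝ)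
    (h₁ g₁ C₁₁ C₁₂ h₂ g₂ C₂₁ C₂₂ : ((ZMod N × ZMod N) → S) → ℝ)
    (hdec₁e₁ : ∀ (η : (ZMod N × ZMod N) → S) (x : ZMod N × ZMod N),
      j η x 0 = h₁ (fun w => η (w + (x + (1, 0)))) - h₁ (fun w => η (w + x))
        + g₁ (fun w => η (w + x)) - g₁ (fun w => η (w + (x - (0, 1)))) + C₁₁ η)
    (hdec₁e₂ : ∀ (η : (ZMod N × ZMod N) → S) (x : ZMod N × ZMod N),
      j η x 1 = h₁ (fun w => η (w + (x + (0, 1)))) - h₁ (fun w => η (w + x))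
        + g₁ (fun w => η (w + (x - (1, 0)))) - g₁ (fun w => η (w + x)) + C₁₂ η)
    (hdec₂e₁ : ∀ (η : (ZMod N × ZMod N) → S) (x : ZMod N × ZMod N),
      j η x 0 = h₂ (fun w => η (w + (x + (1, 0)))) - h₂ (fun w => η (w + x))
        + g₂ (fun w => η (w + x)) - g₂ (fun w => η (w + (x - (0, 1)))) + C₂₁ η)
    (hdec₂e₂ : ∀ (η : (ZMod N × ZMod N) → S) (x : ZMod N × ZMod N),
      j η x 1 = h₂ (fun w => η (w + (x + (0, 1)))) - h₂ (fun w => η (w + x))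
        + g₂ (fun w => η (w + (x - (1, 0)))) - g₂ (fun w => η (w + x)) + C₂₂ η) :
    C₁₁ = C₂₁ ∧ C₁₂ = C₂₂ ∧
    (∀ (η : (ZMod N × ZMod N) → S) (z : ZMod N × ZMod N),
      (h₁ - h₂) (fun w => η (w - z)) = (h₁ - h₂) η) ∧
    (∀ (η : (ZMod N × ZMod N) → S) (z : ZMod N × ZMod N),
      (g₁ - g₂) (fun w => η (w - z)) = (g₁ - g₂) η) := by
  have hsol (η : (ZMod N × ZMod N) → S) :=
    trivial_of_grad_add_rotGrad_add_const_eq_zero (F := translates (h₁ - h₂) η)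
      (G := translates (g₁ - g₂) η) (c₁ := C₁₁ η - C₂₁ η) (c₂ := C₁₂ η - C₂₂ η)
      (ZMod.closure_prod_basis_eq_top N)
      (fun x => by simp only [translates, Pi.sub_apply]; linarith [hdec₁e₁ η x, hdec₂e₁ η x])
      (fun x => by simp only [translates, Pi.sub_apply]; linarith [hdec₁e₂ η x, hdec₂e₂ η x])
  exact ⟨funext fun η => sub_eq_zero.mp (hsol η).1, funext fun η => sub_eq_zero.mp (hsol η).2.1,
    fun η => apply_comp_sub_eq_of_translates_const (hsol η).2.2.1,
    fun η => apply_comp_sub_eq_of_translates_const (hsol η).2.2.2⟩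

/-- **Functional Hodge decomposition in dimension two (uniqueness part).**
Let `j` be a translational covariant discrete vector field on `V_N = (ZMod N)²`
(`j η x i` is `j_η(x, x+eⁱ⁺¹)`, covariance: `j_{τ_z η}(x+z, y+z) = j_η(x,y)` with
`(τ_z η)(w) = η (w - z)`). If `(h₁, g₁, C₁¹, C₁²)` and `(h₂, g₂, C₂¹, C₂²)` both
satisfy the two-dimensional decomposition
`j_η(x,x+e¹) = τ_{x+e¹}h_i(η) - τ_x h_i(η) + τ_x g_i(η) - τ_{x-e²}g_i(η) + C_i¹(η)`,
`j_η(x,x+e²) = τ_{x+e²}h_i(η) - τ_x h_i(η) + τ_{x-e¹}g_i(η) - τ_x g_i(η) + C_i²(η)`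
(with `τ_x f (η) = f (fun w => η (w + x))`) where the `C_i¹, C_i²` are
translational invariant, then `C₁¹ = C₂¹`, `C₁² = C₂²`, and `h₁ - h₂` and
`g₁ - g₂` are translational invariant functions. -/
theorem stmt_4 {N : ℕ} [NeZero N] (hN : 3 ≤ N) {S : Type*}
    (j : ((ZMod N × ZMod N) → S) → (ZMod N × ZMod N) → Fin 2 → ℝ)
    (hcov : ∀ (η : (ZMod N × ZMod N) → S) (z x : ZMod N × ZMod N) (i : Fin 2),
      j (fun w => η (w - z)) (x + z) i = j η x i)
    (h₁ g₁ C₁₁ C₁₂ h₂ g₂ C₂₁ C₂₂ : ((ZMod N × ZMod N) → S) → ℝ)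
    (hinv₁₁ : ∀ (η : (ZMod N × ZMod N) → S) (z : ZMod N × ZMod N),
      C₁₁ (fun w => η (w - z)) = C₁₁ η)
    (hinv₁₂ : ∀ (η : (ZMod N × ZMod N) → S) (z : ZMod N × ZMod N),
      C₁₂ (fun w => η (w - z)) = C₁₂ η)
    (hinv₂₁ : ∀ (η : (ZMod N × ZMod N) → S) (z : ZMod N × ZMod N),
      C₂₁ (fun w => η (w - z)) = C₂₁ η)
    (hinv₂₂ : ∀ (η : (ZMod N × ZMod N) → S) (z : ZMod N × ZMod N),
      C₂₂ (fun w => η (w - z)) = C₂₂ η)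
    (hdec₁e₁ : ∀ (η : (ZMod N × ZMod N) → S) (x : ZMod N × ZMod N),
      j η x 0 = h₁ (fun w => η (w + (x + (1, 0)))) - h₁ (fun w => η (w + x))
        + g₁ (fun w => η (w + x)) - g₁ (fun w => η (w + (x - (0, 1)))) + C₁₁ η)
    (hdec₁e₂ : ∀ (η : (ZMod N × ZMod N) → S) (x : ZMod N × ZMod N),
      j η x 1 = h₁ (fun w => η (w + (x + (0, 1)))) - h₁ (fun w => η (w + x))
        + g₁ (fun w => η (w + (x - (1, 0)))) - g₁ (fun w => η (w + x)) + C₁₂ η)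
    (hdec₂e₁ : ∀ (η : (ZMod N × ZMod N) → S) (x : ZMod N × ZMod N),
      j η x 0 = h₂ (fun w => η (w + (x + (1, 0)))) - h₂ (fun w => η (w + x))
        + g₂ (fun w => η (w + x)) - g₂ (fun w => η (w + (x - (0, 1)))) + C₂₁ η)
    (hdec₂e₂ : ∀ (η : (ZMod N × ZMod N) → S) (x : ZMod N × ZMod N),
      j η x 1 = h₂ (fun w => η (w + (x + (0, 1)))) - h₂ (fun w => η (w + x))
        + g₂ (fun w => η (w + (x - (1, 0)))) - g₂ (fun w => η (w + x)) + C₂₂ η) :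
    C₁₁ = C₂₁ ∧ C₁₂ = C₂₂ ∧
    (∀ (η : (ZMod N × ZMod N) → S) (z : ZMod N × ZMod N),
      (h₁ - h₂) (fun w => η (w - z)) = (h₁ - h₂) η) ∧
    (∀ (η : (ZMod N × ZMod N) → S) (z : ZMod N × ZMod N),
      (g₁ - g₂) (fun w => η (w - z)) = (g₁ - g₂) η) :=
  stmt_4_general j h₁ g₁ C₁₁ C₁₂ h₂ g₂ C₂₁ C₂₂ hdec₁e₁ hdec₁e₂ hdec₂e₁ hdec₂e₂
end

section
/- Consider the one-dimensional symmetric exclusion process with a nearest-neighbour perturbation: configurations are η : ZMod N → {0,1}, α is a real parameter, and the instantaneous current across (x, x+1) is j_η(x, x+1) = (η(x) − η(x+1)) + α (η(x) − η(x+1)) η(x−1) (occupation numbers regarded as real numbers). Define h(η) := −η(0) + α ∑_{x=1}^{N−1} (x/N)(η(x̄) − η(x̄+1)) η(x̄−1) and C(η) := (α/N) ∑_{x ∈ ZMod N} (η(x) − η(x+1)) η(x−1), where x̄ is the class of x in ZMod N. Then for every configuration η and every x ∈ ZMod N, j_η(x, x+1) = τ_{x+1}h(η) − τ_x h(η) +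 C(η). -/
/-!
The symmetric part `η(x) - η(x+1)` of the current is the gradient of `-η(0)`. The perturbation
is `α G(x)` with `G(y) = (η(y) - η(y+1)) η(y-1)`, and on `ZMod N` every function minus its mean
is a discrete gradient: by summation by parts,
`∑_{k=1}^{N-1} (k/N) (G(k+x+1) - G(k+x)) = G(x) - (1/N) ∑_y G(y)`.
-/

open Finset

theorem ZMod.sum_eq_sum_range {N : ℕ} [NeZero N] {M : Type*} [AddCommMonoid M] (f : ZMod N → M) :
    ∑ y : ZMod N, f y = ∑ m ∈ range N, f m :=
  sum_nbij' ZMod.val (↑) (fun a _ => mem_range.mpr a.val_lt) (fun _ _ => mem_univ _)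
    (fun a _ => a.natCast_zmod_val) (fun _ ha => ZMod.val_cast_of_lt (mem_range.mp ha))
    (fun a _ => by rw [a.natCast_zmod_val])

theorem ZMod.sum_Icc_natCast_mul_sub {N : ℕ} [NeZero N] {R : Type*} [CommRing R]
    (G : ZMod N → R) (x : ZMod N) :
    ∑ k ∈ Icc 1 (N - 1), (k : R) * (G (k + (x + 1)) - G (k + x)) = N * G x - ∑ y, G y := by
  set f : ℕ → R := fun m => G (m + x)
  have hshift (k : ℕ) : G (k + (x + 1)) = f (k + 1) := by simp only [f]; push_cast; ring_nf
  have hperiod : f N = f 0 := by simp [f]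
  have hsum : ∑ y, G y = ∑ k ∈ range N, f (k + 1) := by
    have hsplit := sum_range_succ f N
    rw [sum_range_succ', hperiod] at hsplit
    rw [← Equiv.sum_comp (Equiv.addRight x), ZMod.sum_eq_sum_range]
    exact add_right_cancel hsplit.symm
  have hIcc : Icc 1 (N - 1) = Ico 1 N := by
    rw [← Ico_add_one_right_eq_Icc, Nat.sub_add_cancel NeZero.one_le]
  simp only [hIcc, hshift]
  rw [hsum, show G x = f N by simp [f], ← sum_range_natCast_mul_sub,
    sum_range_eq_add_Ico _ (NeZero.pos N)]
  simp only [f, Nat.cast_zero, zero_mul, zero_add]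

theorem stmt_5_general {N : ℕ} [NeZero N] (α : ℝ) :
    let ρ : (ZMod N → Fin 2) → ZMod N → ℝ := fun η x => ((η x : ℕ) : ℝ)
    let j : (ZMod N → Fin 2) → ZMod N → ℝ := fun η x =>
      (ρ η x - ρ η (x + 1)) + α * (ρ η x - ρ η (x + 1)) * ρ η (x - 1)
    let h : (ZMod N → Fin 2) → ℝ := fun η =>
      -(ρ η 0) + α * ∑ k ∈ Finset.Icc 1 (N - 1),
        ((k : ℝ) / N) * ((ρ η (k : ZMod N) - ρ η ((k : ZMod N) + 1)) * ρ η ((k : ZMod N) - 1))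
    let C : (ZMod N → Fin 2) → ℝ := fun η =>
      (α / (N : ℝ)) * ∑ x : ZMod N, (ρ η x - ρ η (x + 1)) * ρ η (x - 1)
    ∀ (η : ZMod N → Fin 2) (x : ZMod N),
      j η x = h (fun w => η (w + (x + 1))) - h (fun w => η (w + x)) + C η := by
  intro ρ j h C η x
  simp only [j, C]
  set G : ZMod N → ℝ := fun y => (ρ η y - ρ η (y + 1)) * ρ η (y - 1)
  have h_translate (y : ZMod N) :
      h (fun w => η (w + y)) = -ρ η y + α * ∑ k ∈ Icc 1 (N - 1), ((k : ℝ) / N) * G (k + y) := by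
    simp only [h, G, ρ, zero_add, add_right_comm _ (1 : ZMod N), sub_add_eq_add_sub]
  have hN : (N : ℝ) ≠ 0 := NeZero.ne _
  have hdiff : ∑ k ∈ Icc 1 (N - 1), ((k : ℝ) / N) * G (k + (x + 1))
      - ∑ k ∈ Icc 1 (N - 1), ((k : ℝ) / N) * G (k + x) = G x - (∑ y, G y) / N := calc
    _ = (∑ k ∈ Icc 1 (N - 1), (k : ℝ) * (G (k + (x + 1)) - G (k + x))) / N := by
      rw [← sum_sub_distrib, sum_div]
      exact sum_congr rfl fun k _ => by ring
    _ = G x - (∑ y, G y) / N := by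
      rw [ZMod.sum_Icc_natCast_mul_sub]
      field_simp
  rw [h_translate, h_translate, eq_add_of_sub_eq' hdiff]
  ring

/-- **Hodge decomposition of the current of a perturbed symmetric exclusion
process in one dimension.** Configurations are `η : ZMod N → {0,1}` (occupation
numbers regarded as reals), `α` is a real parameter, and the instantaneous
current across `(x, x+1)` is
`j_η(x,x+1) = (η(x) - η(x+1)) + α (η(x) - η(x+1)) η(x-1)`.
With `h(η) := -η(0) + α ∑_{x=1}^{N-1} (x/N)(η(x̄) - η(x̄+1)) η(x̄-1)` and
`C(η) := (α/N) ∑_{x ∈ ZMod N} (η(x) - η(x+1)) η(x-1)`, one has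
`j_η(x,x+1) = τ_{x+1}h(η) - τ_x h(η) + C(η)` for every `η` and `x`
(where `τ_x f (η) = f (fun w => η (w + x))`). -/
theorem stmt_5 {N : ℕ} [NeZero N] (hN : 3 ≤ N) (α : ℝ) :
    let ρ : (ZMod N → Fin 2) → ZMod N → ℝ := fun η x => ((η x : ℕ) : ℝ)
    let j : (ZMod N → Fin 2) → ZMod N → ℝ := fun η x =>
      (ρ η x - ρ η (x + 1)) + α * (ρ η x - ρ η (x + 1)) * ρ η (x - 1)
    let h : (ZMod N → Fin 2) → ℝ := fun η =>
      -(ρ η 0) + α * ∑ k ∈ Finset.Icc 1 (N - 1),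
        ((k : ℝ) / N) * ((ρ η (k : ZMod N) - ρ η ((k : ZMod N) + 1)) * ρ η ((k : ZMod N) - 1))
    let C : (ZMod N → Fin 2) → ℝ := fun η =>
      (α / (N : ℝ)) * ∑ x : ZMod N, (ρ η x - ρ η (x + 1)) * ρ η (x - 1)
    ∀ (η : ZMod N → Fin 2) (x : ZMod N),
      j η x = h (fun w => η (w + (x + 1))) - h (fun w => η (w + x)) + C η :=
  stmt_5_general α
end

section
/- Consider the perturbed symmetric exclusion process with vorticity on V_N = (ZMod N)²: configurations are η : V_N → {0,1}, and with real parameters α, β satisfying |α| + |β| < 1 define g(η) = α if η(0) = η(e¹+e²) = 1 and η(e¹) = η(e²) = 0, g(η) = β if η(e¹) = η(e²) = 1 and η(0) = η(e¹+e²) = 0, and g(η) = 0 otherwise. Define h(η) = −η(0) and the discrete vector field j_η(x,y) := [τ_y h(η) − τ_x h(η)] + [τ_{𝔣⁺(x,y)} g(η) − τ_{𝔣⁻(x,y)} g(η)] on oriented nearest-neighbour edges. Then for every configuration η and every oriented nearest-neighbour edge (x,y): (i) if η(x) = η(y) then j_η(x,y) = 0; (ii) if η(x) = 1 and η(y) =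 0 then j_η(x,y) ≥ 1 − |α| − |β| > 0. Consequently the rates c_{x,y}(η) := [j_η(x,y)]₊ define an exclusion dynamics whose instantaneous current c_{x,y}(η) − c_{y,x}(η) equals j_η(x,y). -/
/-- **The perturbed symmetric exclusion process with vorticity is a well-defined
exclusion dynamics.** On `V_N = (ZMod N)²`, configurations are `η : V_N → {0,1}`
and, for real parameters `α, β` with `|α| + |β| < 1`, the local function `g`
equals `α` on the diagonal configuration (`η(0) = η(e¹+e²) = 1`,
`η(e¹) = η(e²) = 0`), `β` on the antidiagonal one, and `0` otherwise; `h(η) = -η(0)`.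
The discrete vector field
`j_η(x,y) = [τ_y h(η) - τ_x h(η)] + [τ_{𝔣⁺(x,y)} g(η) - τ_{𝔣⁻(x,y)} g(η)]`
(`j1 η x = j_η(x,x+e¹)`, `j2 η x = j_η(x,x+e²)`, reversed edges by antisymmetry;
`τ_z f (η) = f (fun w => η (w + z))`) satisfies, for every `η` and every oriented
nearest-neighbour edge: (i) if the occupation numbers at the two endpoints agree
then the current vanishes; (ii) if the edge points from an occupied to an empty
site then the current is at least `1 - |α| - |β| > 0`. Consequently the rates
`c_{x,y}(η) := [j_η(x,y)]₊` define an exclusion dynamics whose instantaneous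
current `c_{x,y}(η) - c_{y,x}(η)` equals `j_η(x,y)`. -/
theorem stmt_19 {N : ℕ} [NeZero N] (hN : 3 ≤ N) (α β : ℝ)
    (hαβ : |α| + |β| < 1) :
    let T : (ZMod N × ZMod N) → ((ZMod N × ZMod N) → Fin 2) → ((ZMod N × ZMod N) → Fin 2) :=
      fun z η w => η (w + z)
    let g : ((ZMod N × ZMod N) → Fin 2) → ℝ := fun η =>
      if η (0, 0) = 1 ∧ η (1, 1) = 1 ∧ η (1, 0) = 0 ∧ η (0, 1) = 0 then α
      else if η (1, 0) = 1 ∧ η (0, 1) = 1 ∧ η (0, 0) = 0 ∧ η (1, 1) = 0 then β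
      else 0
    let h : ((ZMod N × ZMod N) → Fin 2) → ℝ := fun η => -((η (0, 0) : ℕ) : ℝ)
    -- `j1 η x = j_η(x, x+e¹)`, `j2 η x = j_η(x, x+e²)`
    let j1 : ((ZMod N × ZMod N) → Fin 2) → (ZMod N × ZMod N) → ℝ := fun η x =>
      (h (T (x + (1, 0)) η) - h (T x η)) + (g (T x η) - g (T (x - (0, 1)) η))
    let j2 : ((ZMod N × ZMod N) → Fin 2) → (ZMod N × ZMod N) → ℝ := fun η x =>
      (h (T (x + (0, 1)) η) - h (T x η)) + (g (T (x - (1, 0)) η) - g (T x η))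
    (0 < 1 - |α| - |β|) ∧
    -- (i) the current vanishes on edges whose endpoints have equal occupation
    (∀ (η : (ZMod N × ZMod N) → Fin 2) (x : ZMod N × ZMod N),
      (η x = η (x + (1, 0)) → j1 η x = 0) ∧
      (η x = η (x + (0, 1)) → j2 η x = 0)) ∧
    -- (ii) the current from an occupied site to an empty site is ≥ 1 - |α| - |β|
    (∀ (η : (ZMod N × ZMod N) → Fin 2) (x : ZMod N × ZMod N),
      (η x = 1 ∧ η (x + (1, 0)) = 0 → 1 - |α| - |β| ≤ j1 η x) ∧
      (η x = 1 ∧ η (x + (0, 1)) = 0 → 1 - |α| - |β| ≤ j2 η x) ∧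
      (η (x + (1, 0)) = 1 ∧ η x = 0 → 1 - |α| - |β| ≤ -(j1 η x)) ∧
      (η (x + (0, 1)) = 1 ∧ η x = 0 → 1 - |α| - |β| ≤ -(j2 η x))) ∧
    -- the rates `c_{x,y}(η) = [j_η(x,y)]₊` have instantaneous current `j_η(x,y)`
    (∀ (η : (ZMod N × ZMod N) → Fin 2) (x : ZMod N × ZMod N),
      max (j1 η x) 0 - max (-(j1 η x)) 0 = j1 η x ∧
      max (j2 η x) 0 - max (-(j2 η x)) 0 = j2 η x) := by
  
  intro T g h j1 j2
  have ha := abs_nonneg α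
  have hb := abs_nonneg β
  have ha1 := neg_abs_le α
  have ha2 := le_abs_self α
  have hb1 := neg_abs_le β
  have hb2 := le_abs_self β
  refine ⟨by linarith, ?_, ?_, fun η x =>
    ⟨max_zero_sub_max_neg_zero_eq_self _, max_zero_sub_max_neg_zero_eq_self _⟩⟩
  · rintro η ⟨x1, x2⟩
    simp only [T, g, h, j1, j2, Prod.mk_add_mk, Prod.mk_sub_mk]
    ring_nf
    constructor <;> intro hη <;> split_ifs <;> simp_all <;> linarith
  · rintro η ⟨x1, x2⟩
    simp only [T, g, h, j1, j2, Prod.mk_add_mk, Prod.mk_sub_mk]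
    ring_nf
    refine ⟨?_, ?_, ?_, ?_⟩ <;> rintro ⟨h1, h2⟩ <;> split_ifs <;> simp_all <;> linarith
end
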